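/- Given access to oracles add : D_enc × D_enc → D_enc, divide : D_enc × D_enc → D_enc, and equal : D_enc × D_enc → Bool that correctly implement addition, division, and equality on encrypted positive integers, the enumeration procedure (compute enc(1) = divide(c, c), then repeatedly add enc(1) and test equality with c) terminates and returns the plaintext value of any ciphertext c encrypting a positive integer n, after exactly n equality tests. -/

import Mathlib

/-! Since `divide c c = enc 1`, the counter ciphertexts satisfy the same recursion as `enc`
along `ℕ+`, so the `k`-th one is `enc k`; correctness of `equal` then says the test at step
`k` succeeds exactly when `k = n`. -/

theorem eq_enc_of_iterate_add {D : Type*} (enc : ℕ+ → D) (add : D → D → D)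
    (hadd : ∀ a b : ℕ+, add (enc a) (enc b) = enc (a + b))
    (f : ℕ+ → D) (hone : f 1 = enc 1) (hsucc : ∀ k : ℕ+, f (k + 1) = add (f k) (enc 1)) :
    f = enc := by
  funext k
  induction k using PNat.recOn with
  | one => exact hone
  | succ k ih => rw [hsucc, ih, hadd]

theorem enumeration_attack_general {Denc : Type*} (enc : ℕ+ → Denc)
    (add divide : Denc → Denc → Denc) (equal : Denc → Denc → Bool)
    (hdiv : ∀ a : ℕ+, divide (enc a) (enc a) = enc 1)
    (hadd : ∀ a b : ℕ+, add (enc a) (enc b) = enc (a + b))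
    (heq : ∀ a b : ℕ+, (equal (enc a) (enc b) = true) ↔ a = b)
    (n : ℕ+) (c : Denc) (hc : c = enc n)
    (iEnc : ℕ+ → Denc)
    (hstart : iEnc 1 = divide c c)
    (hstep : ∀ k : ℕ+, iEnc (k + 1) = add (iEnc k) (divide c c)) :
    ∀ k : ℕ+, (equal c (iEnc k) = true) ↔ k = n := by
  have hunit : divide c c = enc 1 := hc ▸ hdiv n
  have hcounter : iEnc = enc :=
    eq_enc_of_iterate_add enc add hadd iEnc (hunit ▸ hstart) (hunit ▸ hstep)
  intro k
  rw [hc, hcounter, heq, eq_comm]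

/-- The enumeration attack: given oracles `add`, `divide`, `equal` correctly
implementing arithmetic and equality on encrypted positive integers, the
procedure that computes `enc 1 = divide c c` and repeatedly adds it, testing
equality with `c`, succeeds exactly at step `n` for a ciphertext `c = enc n`:
hence it terminates and returns the plaintext `n` after exactly `n` equality
tests (tests at steps `1, ..., n`). -/
theorem enumeration_attack {Denc : Type*} (enc : ℕ+ → Denc)
    (henc : Function.Injective enc)
    (add divide : Denc → Denc → Denc) (equal : Denc → Denc → Bool)
    (hdiv : ∀ a : ℕ+, divide (enc a) (enc a) = enc 1)
    (hadd : ∀ a b : ℕ+, add (enc a) (enc b) = enc (a + b))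
    (heq : ∀ a b : ℕ+, (equal (enc a) (enc b) = true) ↔ a = b)
    (n : ℕ+) (c : Denc) (hc : c = enc n)
    (iEnc : ℕ+ → Denc)
    (hstart : iEnc 1 = divide c c)
    (hstep : ∀ k : ℕ+, iEnc (k + 1) = add (iEnc k) (divide c c)) :
    ∀ k : ℕ+, (equal c (iEnc k) = true) ↔ k = n :=
  enumeration_attack_general enc add divide equal hdiv hadd heq n c hc iEnc hstart hstep
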